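/- Let λ ≥ 2, r ∈ (0,1/6) and C > 1. Let M be a compact metric space which is (λ,r,C)-homogeneous, and let (M_k) be any sequence of (λ,r)-finite hyperbolic approximations of M. Then for every k > log_{1/r}(diam M), d_1(M_k) ≤ 1 + 2C. -/

import Mathlib

open Finset

noncomputable section
open scoped Classical

namespace TCS

/-- The indicator function of a point. -/
def indic {V : Type*} [DecidableEq V] (x : V) : V → ℝ := fun z => if z = x then 1 else 0

/-- The molecule `δ_x - δ_y`. -/
def mol {V : Type*} [DecidableEq V] (x y : V) : V → ℝ := fun z => indic x z - indic y z

/-- `d` is a metric on `V`. -/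
def IsMetric {V : Type*} (d : V → V → ℝ) : Prop :=
  (∀ x y, d x y = d y x) ∧ (∀ x y, d x y = 0 ↔ x = y) ∧ ∀ x y z, d x z ≤ d x y + d y z

/-- The transportation cost norm of `μ` (an element of the free space over `(V, d)`,
i.e. a function with total sum zero), defined by duality with `Lip_0`. -/
def tcNorm {V : Type*} [Fintype V] (d : V → V → ℝ) (x0 : V) (μ : V → ℝ) : ℝ :=
  sSup {c : ℝ | ∃ f : V → ℝ, f x0 = 0 ∧ (∀ x y, |f x - f y| ≤ d x y) ∧ c = ∑ x, μ x * f x}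

/-- `(b, bstar)` is a basis of the free space over `Fin (N+1)` (with basepoint `0`),
indexed by `n ≠ 0`, together with its coordinate functionals. -/
def IsFreeBasis (N : ℕ) (b : Fin (N+1) → Fin (N+1) → ℝ)
    (bstar : Fin (N+1) → (Fin (N+1) → ℝ) → ℝ) : Prop :=
  (∀ n : Fin (N+1), n ≠ 0 → ∑ x, b n x = 0) ∧
  (∀ μ : Fin (N+1) → ℝ, (∑ x, μ x = 0) → ∀ z,
      μ z = ∑ n ∈ univ.filter (· ≠ (0 : Fin (N+1))), bstar n μ * b n z) ∧
  (∀ n m : Fin (N+1), n ≠ 0 → m ≠ 0 → bstar n (b m) = if n = m then 1 else 0) ∧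
  (∀ n (c : ℝ) (μ ν : Fin (N+1) → ℝ), bstar n (c • μ + ν) = c * bstar n μ + bstar n ν)

/-- Every canonical projection of the (ordered) basis `(b, bstar)` is a stochastic
retraction. -/
def IsStochProj (N : ℕ) (b : Fin (N+1) → Fin (N+1) → ℝ)
    (bstar : Fin (N+1) → (Fin (N+1) → ℝ) → ℝ) : Prop :=
  ∀ n : Fin (N+1),
    ∃ S : Finset (Fin (N+1)), (0 : Fin (N+1)) ∈ S ∧
      ∃ R : Fin (N+1) → Fin (N+1) → ℝ,
        (∀ x, (∀ z, 0 ≤ R x z) ∧ (∀ z, z ∉ S → R x z = 0) ∧ ∑ z, R x z = 1) ∧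
        (∀ x ∈ S, R x = indic x) ∧
        (∀ μ : Fin (N+1) → ℝ, (∑ x, μ x = 0) → ∀ z,
          (∑ i ∈ univ.filter (fun i => i ≠ (0 : Fin (N+1)) ∧ i ≤ n), bstar i μ * b i z)
            = ∑ x, μ x * R x z)

/-- The `ℓ₁`-distortion of the basis `(b, bstar)`. -/
def d1Basis {N : ℕ} (d : Fin (N+1) → Fin (N+1) → ℝ) (b : Fin (N+1) → Fin (N+1) → ℝ)
    (bstar : Fin (N+1) → (Fin (N+1) → ℝ) → ℝ) : ℝ :=
  sSup {c : ℝ | ∃ μ : Fin (N+1) → ℝ, (∑ x, μ x = 0) ∧ tcNorm d 0 μ = 1 ∧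
    c = ∑ n ∈ univ.filter (· ≠ (0 : Fin (N+1))), |bstar n μ| * tcNorm d 0 (b n)}

/-- The `ℓ₁ᴺ`-distortion of the metric space `(Fin (N+1), d)`. -/
def d1Space {N : ℕ} (d : Fin (N+1) → Fin (N+1) → ℝ) : ℝ :=
  sInf {c : ℝ | ∃ b bstar, IsFreeBasis N b bstar ∧ c = d1Basis d b bstar}

/-- The stochastic `ℓ₁ᴺ`-distortion of the metric space `(Fin (N+1), d)`. -/
def sd1Space {N : ℕ} (d : Fin (N+1) → Fin (N+1) → ℝ) : ℝ :=
  sInf {c : ℝ | ∃ b bstar, IsFreeBasis N b bstar ∧ IsStochProj N b bstar ∧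
      c = d1Basis d b bstar}

/-- The data `(λ_{n,i})` of a normalised stochastic basis. -/
def LamData (N : ℕ) (lam : Fin (N+1) → Fin (N+1) → ℝ) : Prop :=
  (∀ n i, 0 ≤ lam n i ∧ lam n i ≤ 1) ∧
  (∀ n i : Fin (N+1), ¬ i < n → lam n i = 0) ∧
  (∀ n : Fin (N+1), n ≠ 0 → ∑ i, lam n i = 1)

/-- The normalised stochastic basis with data `F`, `(λ_{n,i})`:
`b n = δ_{F n} - ∑_{i<n} λ_{n,i} δ_{F i}`. -/
def normBasisF {N : ℕ} (F : Equiv.Perm (Fin (N+1))) (lam : Fin (N+1) → Fin (N+1) → ℝ)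
    (n : Fin (N+1)) : Fin (N+1) → ℝ :=
  fun z => indic (F n) z - ∑ i, lam n i * indic (F i) z

/-- The normalised stochastic basis after identifying `M` with `{0, …, N}` via `F`. -/
def normBasis {N : ℕ} (lam : Fin (N+1) → Fin (N+1) → ℝ) : Fin (N+1) → Fin (N+1) → ℝ :=
  normBasisF (Equiv.refl _) lam

/-- `bstar` is the family of coordinate functionals of the normalised
stochastic basis with data `F`, `(λ_{n,i})`. -/
def IsCoordF {N : ℕ} (F : Equiv.Perm (Fin (N+1))) (lam : Fin (N+1) → Fin (N+1) → ℝ)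
    (bstar : Fin (N+1) → (Fin (N+1) → ℝ) → ℝ) : Prop :=
  ∀ μ : Fin (N+1) → ℝ, (∑ x, μ x = 0) → ∀ z,
    μ z = ∑ n ∈ univ.filter (· ≠ (0 : Fin (N+1))), bstar n μ * normBasisF F lam n z

/-- The auxiliary function `α(μ)` defined by downwards recursion:
`α(μ)(n) = μ n + ∑_{m > n} α(μ)(m) λ_{m,n}`. -/
def alpha {N : ℕ} (lam : Fin (N+1) → Fin (N+1) → ℝ) (μ : Fin (N+1) → ℝ)
    (n : Fin (N+1)) : ℝ :=
  μ n + ∑ m ∈ (Finset.univ.filter (fun m : Fin (N+1) => n < m)).attach,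
      alpha lam μ m.1 * lam m.1 n
termination_by (N + 1) - n.val
decreasing_by
  have hm := m.2
  simp only [Finset.mem_filter, Finset.mem_univ, true_and] at hm
  have h1 : n.val < m.1.val := hm
  have h2 := m.1.isLt
  omega

/-- Trees on `{0,…,N}` compatible with the order: given by a parent map with
`par n < n` for `n ≠ 0`. -/
def Tr (N : ℕ) : Type :=
  {par : Fin (N+1) → Fin (N+1) // par 0 = 0 ∧ ∀ n, n ≠ 0 → par n < n}

instance (N : ℕ) : Finite (Tr N) :=
  inferInstanceAs (Finite {par : Fin (N+1) → Fin (N+1) // par 0 = 0 ∧ ∀ n, n ≠ 0 → par n < n})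

noncomputable instance (N : ℕ) : Fintype (Tr N) := Fintype.ofFinite _

/-- `a` lies on the tree path from `x` to the root `0`. -/
def Anc {N : ℕ} (T : Tr N) (x a : Fin (N+1)) : Prop :=
  Relation.ReflTransGen (fun u v => v = T.1 u ∧ u ≠ 0) x a

/-- The meeting point `m_T(x,y)`: the minimal vertex of the tree path `[x,y]_T`,
equivalently the nearest common ancestor. -/
noncomputable def meet {N : ℕ} (T : Tr N) (x y : Fin (N+1)) : Fin (N+1) :=
  WithBot.unbotD 0 ((Finset.univ.filter (fun a => Anc T x a ∧ Anc T y a)).max)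

/-- `p` is a probability distribution on `Tr N`. -/
def IsProb {N : ℕ} (p : Tr N → ℝ) : Prop := (∀ T, 0 ≤ p T) ∧ ∑ T, p T = 1

/-- Probability of an event. -/
def probOf {N : ℕ} (p : Tr N → ℝ) (P : Tr N → Prop) : ℝ :=
  ∑ T ∈ Finset.univ.filter P, p T

/-- Expectation. -/
def expval {N : ℕ} (p : Tr N → ℝ) (f : Tr N → ℝ) : ℝ := ∑ T, p T * f T

/-- The geodesic distance `d_T(x,y)` of the weighted tree `T` (edge `{n, par n}`
carrying weight `d n (par n)`). -/
noncomputable def treeDist {N : ℕ} (d : Fin (N+1) → Fin (N+1) → ℝ) (T : Tr N)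
    (x y : Fin (N+1)) : ℝ :=
  ∑ s ∈ Finset.univ.filter (fun s =>
      (Anc T x s ∨ Anc T y s) ∧ Anc T s (meet T x y) ∧ s ≠ meet T x y),
    d s (T.1 s)

/-- `s` lies on the half-open segment `[z, m)_T`. -/
def onHalfSeg {N : ℕ} (T : Tr N) (z m s : Fin (N+1)) : Prop :=
  Anc T z s ∧ Anc T s m ∧ s ≠ m

/-- `p` is `(x,y)`-independent. -/
def XYIndep {N : ℕ} (p : Tr N → ℝ) (x y : Fin (N+1)) : Prop :=
  ∀ z : Fin (N+1), (z = x ∨ z = y) → ∀ s t : Fin (N+1), t < s →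
    probOf p (fun T => T.1 s = t ∧ onHalfSeg T z (meet T x y) s)
      = probOf p (fun T => T.1 s = t) * probOf p (fun T => onHalfSeg T z (meet T x y) s)

/-- `p0` and `p` are compatible: every vertex pair has the same probability of
being an edge of the random tree. -/
def Compat {N : ℕ} (p0 p : Tr N → ℝ) : Prop :=
  ∀ s t : Fin (N+1), t < s →
    probOf p0 (fun T => T.1 s = t) = probOf p (fun T => T.1 s = t)

/-- The product probability `π_{(b_n)}` determined by the data `(λ_{n,i})`. -/
def prodProb {N : ℕ} (lam : Fin (N+1) → Fin (N+1) → ℝ) (T : Tr N) : ℝ :=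
  ∏ n ∈ Finset.univ.filter (fun n : Fin (N+1) => n ≠ 0), lam n (T.1 n)

/-- The (strictly decreasing) chain with vertex set `S` is a subgraph of `T`:
consecutive elements of `S` are linked by the parent map. -/
def chainInTree {N : ℕ} (S : Finset (Fin (N+1))) (T : Tr N) : Prop :=
  ∀ a ∈ S, (∃ c ∈ S, c < a) → T.1 a ∈ S ∧ ∀ c ∈ S, c < a → c ≤ T.1 a

end TCS

namespace TCS

def IsNet {M : Type*} [MetricSpace M] (ε : ℝ) (L : Set M) : Prop :=
  (∀ x ∈ L, ∀ y ∈ L, x ≠ y → ε ≤ dist x y) ∧ ∀ x : M, ∃ y ∈ L, dist x y ≤ ε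

/-- `M` is doubling with constant `D`: every ball of radius `R` is covered by at
most `D` balls of radius `R/2`. -/
def IsDoublingWith (M : Type*) [MetricSpace M] (D : ℝ) : Prop :=
  ∀ (x : M) (R : ℝ), 0 < R → ∃ t : Finset M,
    (t.card : ℝ) ≤ D ∧
      Metric.closedBall x R ⊆ ⋃ y ∈ t, Metric.closedBall y (R / 2)

/-- `M` is `(λ, r, C)`-homogeneous. -/
def IsHomog (M : Type*) [MetricSpace M] (lam r C : ℝ) : Prop :=
  ∀ ε : ℝ, 0 < ε → ∀ Lnet : Set M, IsNet ε Lnet → ∀ x : M,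
    (Lnet ∩ Metric.closedBall x (lam * ε)).Finite ∧
    ((Lnet ∩ Metric.closedBall x (lam * ε)).ncard : ℝ) ≤
      C * ((Lnet ∩ Metric.closedBall x (lam * ε * (1 - 3 * r))).ncard : ℝ)

/-- The vertex set of the hyperbolic approximation `G_k`: the disjoint union of
the layers `L_{-k}, …, L_k`. -/
def HypV (M : Type*) [MetricSpace M] (L : ℤ → Set M) (k : ℕ) : Type _ :=
  {p : ℤ × M // p.1 ∈ Finset.Icc (-(k : ℤ)) (k : ℤ) ∧ p.2 ∈ L p.1}

/-- The hyperbolic approximation graph `G_k`, with horizontal and radial edges. -/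
def hypGraph (lam r : ℝ) (M : Type*) [MetricSpace M] (L : ℤ → Set M) (k : ℕ) :
    SimpleGraph (HypV M L k) :=
  SimpleGraph.fromRel (fun u v =>
    (u.1.1 = v.1.1 ∧
      ∃ z : M, dist z u.1.2 ≤ lam * r ^ u.1.1 ∧ dist z v.1.2 ≤ lam * r ^ u.1.1) ∨
    (v.1.1 = u.1.1 + 1 ∧
      Metric.closedBall v.1.2 (lam * r ^ v.1.1) ⊆ Metric.closedBall u.1.2 (lam * r ^ u.1.1)))

/-- The set `N(v)` of radial neighbours in the layer `L_i` of a point `v` of the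
layer `L_{i+1}`. -/
def radialNbrs (lam r : ℝ) {M : Type*} [MetricSpace M] (L : ℤ → Set M) (i : ℤ)
    (v : M) : Set M :=
  {n | n ∈ L i ∧ Metric.closedBall v (lam * r ^ (i + 1)) ⊆ Metric.closedBall n (lam * r ^ i)}

/-- The measure `μ` on the layer `L_i` obtained by splitting the molecule
`ρ (δ_x - δ_y)` of the horizontal edge `{x,y} ⊆ L_{i+1}` radially down. -/
def hypMu (lam r : ℝ) {M : Type*} [MetricSpace M] (L : ℤ → Set M) (i : ℤ)
    (ρ : ℝ) (x y : M) : M → ℝ := fun n =>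
  (if n ∈ radialNbrs lam r L i x then ρ / ((radialNbrs lam r L i x).ncard : ℝ) else 0)
    - (if n ∈ radialNbrs lam r L i y then ρ / ((radialNbrs lam r L i y).ncard : ℝ) else 0)


end TCS

/-!
Order the vertices of `G_k` by layers and let every vertex above the root spread its mass
uniformly over its radial neighbours one layer down. This is a normalised stochastic basis
`δ_n - ∑ᵢ λ_{n,i} δ_i`; its vectors are averages of molecules of edges, so they have norm at most
`1`. By Kantorovich duality the unit ball of `F(M_k)` is the convex hull of the molecules of
edges, and the `ℓ₁`-norm of the coordinates is convex, so it suffices to bound it on the molecule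
`δ_x - δ_y` of an edge. Pick `z` in both balls. Going down from the lower endpoint, homogeneity
shows that all vertices of a layer whose balls contain `z` share a proportion `1/C` of their
radial neighbours, so by Dobrushin's estimate each layer contracts the total variation of the
coordinates by `1 - 1/C`. The layer of the lower endpoint carries variation at most `2`, the
geometric series gives `2C`, and the layer of the upper endpoint adds at most `1`.
-/

namespace SimpleGraph

variable {W : Type*} {G : SimpleGraph W} {g : W → ℝ}

lemma Walk.abs_sub_le_length (hg : ∀ a b, G.Adj a b → g a - g b ≤ 1) {a b : W}
    (p : G.Walk a b) : |g a - g b| ≤ p.length := by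
  induction p with
  | nil => simp
  | @cons a v b h q ih =>
    have hav : |g a - g v| ≤ 1 := abs_sub_le_iff.2 ⟨hg a v h, hg v a h.symm⟩
    calc |g a - g b| ≤ |g a - g v| + |g v - g b| := abs_sub_le _ _ _
      _ ≤ 1 + q.length := add_le_add hav ih
      _ = (cons h q).length := by push_cast [Walk.length_cons]; ring

lemma Connected.abs_sub_le_dist (hG : G.Connected) (hg : ∀ a b, G.Adj a b → g a - g b ≤ 1)
    (a b : W) : |g a - g b| ≤ G.dist a b := by
  obtain ⟨p, hp⟩ := (hG a b).exists_walk_length_eq_dist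
  exact hp ▸ p.abs_sub_le_length hg

end SimpleGraph

namespace TCS

section TransportationCost

variable {V : Type*} [Fintype V] {d : V → V → ℝ} {x0 : V} {μ : V → ℝ}

lemma bddAbove_pairings (d : V → V → ℝ) (x0 : V) (μ : V → ℝ) :
    BddAbove {c : ℝ | ∃ f : V → ℝ, f x0 = 0 ∧ (∀ x y, |f x - f y| ≤ d x y) ∧
      c = ∑ x, μ x * f x} := by
  refine ⟨∑ x, |μ x| * d x x0, ?_⟩
  rintro c ⟨f, hf0, hf, rfl⟩
  refine Finset.sum_le_sum fun x _ => ?_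
  have hfx : |f x| ≤ d x x0 := by simpa [hf0] using hf x x0
  calc μ x * f x ≤ |μ x| * |f x| := (le_abs_self _).trans (abs_mul _ _).le
    _ ≤ |μ x| * d x x0 := by gcongr

lemma pairing_le_tcNorm {f : V → ℝ} (hf0 : f x0 = 0) (hf : ∀ x y, |f x - f y| ≤ d x y) :
    ∑ x, μ x * f x ≤ tcNorm d x0 μ :=
  le_csSup (bddAbove_pairings d x0 μ) ⟨f, hf0, hf, rfl⟩

lemma tcNorm_nonneg (hd : ∀ x y, 0 ≤ d x y) : 0 ≤ tcNorm d x0 μ := by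
  simpa using pairing_le_tcNorm (μ := μ) (f := 0) rfl (by simpa using hd)

lemma tcNorm_le {a : ℝ} (ha : 0 ≤ a)
    (h : ∀ f : V → ℝ, f x0 = 0 → (∀ x y, |f x - f y| ≤ d x y) → ∑ x, μ x * f x ≤ a) :
    tcNorm d x0 μ ≤ a :=
  Real.sSup_le (fun _ ⟨f, hf0, hf, hc⟩ => hc ▸ h f hf0 hf) ha

variable [DecidableEq V]

omit [Fintype V] in
lemma indic_eq_single (x : V) : indic x = Pi.single x 1 := by
  ext z
  simp [indic, Pi.single_apply]

omit [Fintype V] in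
lemma indic_nonneg (x : V) : 0 ≤ indic x := fun z => by
  unfold indic
  split_ifs <;> norm_num

lemma sum_indic_mul (x : V) (g : V → ℝ) : ∑ z, indic x z * g z = g x := by
  simp [indic_eq_single, Pi.single_apply]

lemma sum_mul_indic (a : V → ℝ) (z : V) : ∑ x, a x * indic x z = a z := by
  simp [indic]

lemma sum_mol_mul (x y : V) (g : V → ℝ) : ∑ z, mol x y z * g z = g x - g y := by
  simp only [mol, sub_mul, Finset.sum_sub_distrib, sum_indic_mul]

/-- Kantorovich duality, by Hahn–Banach separation. -/
theorem mem_convexHull_mol_of_tcNorm_le_one {Adj : V → V → Prop}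
    (hd : ∀ g : V → ℝ, (∀ i j, Adj i j → g i - g j ≤ 1) → ∀ i j, |g i - g j| ≤ d i j)
    (hμ : ∑ x, μ x = 0) (hnorm : tcNorm d x0 μ ≤ 1) :
    μ ∈ convexHull ℝ (insert 0 {ν | ∃ i j, Adj i j ∧ ν = mol i j}) := by
  set S : Set (V → ℝ) := insert 0 {ν | ∃ i j, Adj i j ∧ ν = mol i j}
  have hS : S.Finite := by
    refine ((Set.finite_range fun p : V × V => mol p.1 p.2).insert 0).subset ?_
    rintro ν (rfl | ⟨i, j, -, rfl⟩)
    exacts [Set.mem_insert _ _, Set.mem_insert_of_mem _ ⟨(i, j), rfl⟩]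
  by_contra hμS
  obtain ⟨f, u, hfS, hfμ⟩ := geometric_hahn_banach_closed_point (convex_convexHull ℝ S)
    (hS.isCompact_convexHull (𝕜 := ℝ)).isClosed hμS
  have hu : 0 < u := by
    simpa only [map_zero] using hfS 0 (subset_convexHull ℝ S (Set.mem_insert _ _))
  set g : V → ℝ := fun x => f (indic x) / u
  have hf : ∀ ν, f ν = u * ∑ x, ν x * g x := by
    intro ν
    conv_lhs => rw [← Finset.univ_sum_single ν]
    simp only [map_sum, g, Finset.mul_sum, indic_eq_single]
    refine Finset.sum_congr rfl fun x _ => ?_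
    rw [show Pi.single x (ν x) = ν x • (Pi.single x 1 : V → ℝ) by ext; simp [Pi.single_apply],
      map_smul, smul_eq_mul]
    field_simp
  have hgadj : ∀ i j, Adj i j → g i - g j ≤ 1 := fun i j hij => by
    have := hfS (mol i j) (subset_convexHull ℝ S (Set.mem_insert_of_mem _ ⟨i, j, hij, rfl⟩))
    rw [hf, sum_mol_mul] at this
    nlinarith
  have hlip : ∀ x y, |(g x - g x0) - (g y - g x0)| ≤ d x y := fun x y => by
    rw [sub_sub_sub_cancel_right]
    exact hd g hgadj x y
  have hpair := (pairing_le_tcNorm (μ := μ) (sub_self (g x0)) hlip).trans hnorm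
  have hshift : ∑ x, μ x * (g x - g x0) = ∑ x, μ x * g x := by
    simp [mul_sub, Finset.sum_sub_distrib, ← Finset.sum_mul, hμ]
  rw [hshift] at hpair
  rw [hf] at hfμ
  nlinarith

theorem le_of_tcNorm_le_one {Adj : V → V → Prop}
    (hd : ∀ g : V → ℝ, (∀ i j, Adj i j → g i - g j ≤ 1) → ∀ i j, |g i - g j| ≤ d i j)
    {Φ : (V → ℝ) → ℝ} (hΦ : ConvexOn ℝ Set.univ Φ) {K : ℝ} (h0 : Φ 0 ≤ K)
    (hmol : ∀ i j, Adj i j → Φ (mol i j) ≤ K) (hμ : ∑ x, μ x = 0) (hnorm : tcNorm d x0 μ ≤ 1) :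
    Φ μ ≤ K := by
  obtain ⟨ν, hν, hμν⟩ := hΦ.exists_ge_of_mem_convexHull (Set.subset_univ _)
    (mem_convexHull_mol_of_tcNorm_le_one hd hμ hnorm)
  rcases hν with rfl | ⟨i, j, hij, rfl⟩
  exacts [hμν.trans h0, hμν.trans (hmol i j hij)]

end TransportationCost

/-- Dobrushin's contraction estimate. -/
theorem sum_abs_sum_mul_le {ι κ : Type*} [DecidableEq κ] {T : Finset ι} {U K : Finset κ}
    {W : ι → ℝ} {P : ι → κ → ℝ} {c : ℝ} (hW : ∑ v ∈ T, W v = 0) (hKU : K ⊆ U)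
    (hP : ∀ v ∈ T, W v ≠ 0 →
      (∀ u ∈ U, 0 ≤ P v u) ∧ ∑ u ∈ U, P v u = 1 ∧ ∀ u ∈ K, c ≤ P v u) :
    ∑ u ∈ U, |∑ v ∈ T, W v * P v u| ≤ (1 - c * K.card) * ∑ v ∈ T, |W v| := by
  set χ : κ → ℝ := fun u => if u ∈ K then c else 0
  have hterm : ∀ u ∈ U, |∑ v ∈ T, W v * P v u| ≤ ∑ v ∈ T, |W v| * (P v u - χ u) := by
    intro u hu
    have hshift : ∑ v ∈ T, W v * P v u = ∑ v ∈ T, W v * (P v u - χ u) := by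
      simp only [mul_sub, Finset.sum_sub_distrib, ← Finset.sum_mul, hW, zero_mul, sub_zero]
    rw [hshift]
    refine (Finset.abs_sum_le_sum_abs _ _).trans (Finset.sum_le_sum fun v hv => ?_)
    rw [abs_mul]
    by_cases hv0 : W v = 0
    · simp [hv0]
    obtain ⟨hP0, -, hPK⟩ := hP v hv hv0
    have hnn : 0 ≤ P v u - χ u := by
      simp only [χ]
      split_ifs with huK
      · exact sub_nonneg.2 (hPK u huK)
      · simpa using hP0 u hu
    rw [abs_of_nonneg hnn]
  calc ∑ u ∈ U, |∑ v ∈ T, W v * P v u|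
      ≤ ∑ u ∈ U, ∑ v ∈ T, |W v| * (P v u - χ u) := Finset.sum_le_sum hterm
    _ = ∑ v ∈ T, |W v| * (∑ u ∈ U, P v u - c * K.card) := by
        rw [Finset.sum_comm]
        refine Finset.sum_congr rfl fun v _ => ?_
        rw [← Finset.mul_sum, Finset.sum_sub_distrib]
        simp [χ, Finset.sum_ite_mem, Finset.inter_eq_right.2 hKU, mul_comm]
    _ = ∑ v ∈ T, |W v| * (1 - c * K.card) := Finset.sum_congr rfl fun v hv => by
        by_cases hv0 : W v = 0
        · simp [hv0]
        · rw [(hP v hv hv0).2.1]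
    _ = _ := by rw [← Finset.sum_mul, mul_comm]

lemma sum_pow_toNat_sub_le {γ : ℝ} (h0 : 0 ≤ γ) (h1 : γ < 1) {a : ℤ} {S : Finset ℤ}
    (hS : ∀ t ∈ S, t ≤ a) : ∑ t ∈ S, γ ^ (a - t).toNat ≤ (1 - γ)⁻¹ := by
  rw [← Finset.sum_image (f := fun n => γ ^ n) fun s hs t ht hst => by
    have := hS s hs; have := hS t ht; omega]
  rw [← tsum_geometric_of_lt_one h0 h1]
  exact Summable.sum_le_tsum _ (fun _ _ => pow_nonneg h0 _) (summable_geometric_of_lt_one h0 h1)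

section Layered

variable {V : Type*} [Fintype V] (lvl : V → ℤ) (w : V → V → ℝ)

/-- The data `λ_{n,i}` of a normalised stochastic basis, ordered by layers rather than by
index: each vertex above the bottom layer spreads unit mass over the layer just below it. -/
structure IsLayeredStochastic (bot : ℤ) : Prop where
  nonneg : ∀ n i, 0 ≤ w n i
  level_eq_of_ne_zero : ∀ n i, w n i ≠ 0 → lvl n = lvl i + 1
  sum_eq_one : ∀ n, bot < lvl n → ∑ i, w n i = 1
  bot_le : ∀ n, bot ≤ lvl n

def levelSet (t : ℤ) : Finset V := univ.filter (lvl · = t)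

lemma card_above_lt {n m : V} (h : lvl m = lvl n + 1) :
    (univ.filter (lvl m < lvl ·)).card < (univ.filter (lvl n < lvl ·)).card := by
  refine Finset.card_lt_card ⟨fun v hv => ?_, fun hsub => ?_⟩
  · simp only [Finset.mem_filter, Finset.mem_univ, true_and] at hv ⊢
    omega
  · have := hsub (Finset.mem_filter.2 ⟨Finset.mem_univ m, by omega⟩)
    simp at this

theorem layer_induction {P : V → Prop} (h : ∀ n, (∀ m, lvl m = lvl n + 1 → P m) → P n)
    (n : V) : P n :=
  (measure fun n => (univ.filter (lvl n < lvl ·)).card).wf.induction n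
    fun n ih => h n fun m hm => ih m (card_above_lt lvl hm)

/-- The coordinate functionals `α(μ)` of the basis `basisVec w`. -/
def coord (μ : V → ℝ) (n : V) : ℝ :=
  μ n + ∑ m ∈ (levelSet lvl (lvl n + 1)).attach, coord μ m * w m n
termination_by (univ.filter (lvl n < lvl ·)).card
decreasing_by exact card_above_lt lvl (Finset.mem_filter.1 m.2).2

lemma coord_eq (μ : V → ℝ) (n : V) :
    coord lvl w μ n = μ n + ∑ m ∈ levelSet lvl (lvl n + 1), coord lvl w μ m * w m n := by
  rw [coord, Finset.sum_attach (levelSet lvl (lvl n + 1)) (fun m => coord lvl w μ m * w m n)]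

lemma eq_coord {μ a : V → ℝ}
    (ha : ∀ n, a n = μ n + ∑ m ∈ levelSet lvl (lvl n + 1), a m * w m n) :
    a = coord lvl w μ := by
  funext n
  induction n using layer_induction lvl with
  | h n ih =>
    rw [ha, coord_eq]
    refine congrArg _ (Finset.sum_congr rfl fun m hm => ?_)
    rw [ih m (Finset.mem_filter.1 hm).2]

lemma coord_smul_add (c : ℝ) (μ ν : V → ℝ) :
    coord lvl w (c • μ + ν) = c • coord lvl w μ + coord lvl w ν := by
  refine (eq_coord lvl w fun n => ?_).symm
  simp only [Pi.add_apply, Pi.smul_apply, smul_eq_mul, coord_eq lvl w _ n, add_mul,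
    Finset.sum_add_distrib, mul_assoc, ← Finset.mul_sum]
  ring

lemma coord_zero : coord lvl w 0 = 0 :=
  (eq_coord lvl w (a := 0) fun n => by simp).symm

lemma coord_smul (c : ℝ) (μ : V → ℝ) : coord lvl w (c • μ) = c • coord lvl w μ := by
  simpa [coord_zero] using coord_smul_add lvl w c μ 0

lemma convexOn_sum_abs_coord : ConvexOn ℝ Set.univ fun μ => ∑ v, |coord lvl w μ v| := by
  refine ⟨convex_univ, fun μ _ ν _ a b ha hb _ => ?_⟩
  simp only [coord_smul_add, coord_smul, Pi.add_apply, Pi.smul_apply, smul_eq_mul,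
    Finset.mul_sum, ← Finset.sum_add_distrib]
  refine Finset.sum_le_sum fun v _ => (abs_add_le _ _).trans_eq ?_
  rw [abs_mul, abs_mul, abs_of_nonneg ha, abs_of_nonneg hb]

variable {lvl w} {bot : ℤ}

lemma IsLayeredStochastic.sum_levelSet_succ_mul_eq_sum (hw : IsLayeredStochastic lvl w bot)
    (a : V → ℝ) (z : V) :
    ∑ m ∈ levelSet lvl (lvl z + 1), a m * w m z = ∑ m, a m * w m z := by
  refine Finset.sum_subset (Finset.subset_univ _) fun m _ hm => ?_
  by_contra h
  exact hm (Finset.mem_filter.2 ⟨Finset.mem_univ m,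
    hw.level_eq_of_ne_zero m z (right_ne_zero_of_mul h)⟩)

lemma IsLayeredStochastic.sum_levelSet_pred_eq_one (hw : IsLayeredStochastic lvl w bot) {n : V}
    (hn : bot < lvl n) : ∑ i ∈ levelSet lvl (lvl n - 1), w n i = 1 := by
  rw [← hw.sum_eq_one n hn]
  refine Finset.sum_subset (Finset.subset_univ _) fun i _ hi => ?_
  by_contra h
  have := hw.level_eq_of_ne_zero n i h
  exact hi (Finset.mem_filter.2 ⟨Finset.mem_univ i, by omega⟩)

lemma IsLayeredStochastic.exists_ne_zero (hw : IsLayeredStochastic lvl w bot) {n : V}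
    (hn : bot < lvl n) : ∃ i, w n i ≠ 0 := by
  obtain ⟨i, -, hi⟩ :=
    Finset.exists_ne_zero_of_sum_ne_zero ((hw.sum_eq_one n hn).trans_ne one_ne_zero)
  exact ⟨i, hi⟩

lemma coord_nonneg (hw : IsLayeredStochastic lvl w bot) {μ : V → ℝ} (hμ : 0 ≤ μ) (n : V) :
    0 ≤ coord lvl w μ n := by
  induction n using layer_induction lvl with
  | h n ih =>
    rw [coord_eq]
    exact add_nonneg (hμ n) (Finset.sum_nonneg fun m hm =>
      mul_nonneg (ih m (Finset.mem_filter.1 hm).2) (hw.nonneg m n))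

lemma sum_levelSet_coord_eq_add (hw : IsLayeredStochastic lvl w bot) (μ : V → ℝ) {t : ℤ}
    (ht : bot ≤ t) :
    ∑ v ∈ levelSet lvl t, coord lvl w μ v =
      ∑ v ∈ levelSet lvl t, μ v + ∑ m ∈ levelSet lvl (t + 1), coord lvl w μ m := by
  have hrow : ∀ m ∈ levelSet lvl (t + 1), ∑ v ∈ levelSet lvl t, w m v = 1 := fun m hm => by
    have hm := (Finset.mem_filter.1 hm).2
    simpa [hm] using hw.sum_levelSet_pred_eq_one (n := m) (by omega)
  calc ∑ v ∈ levelSet lvl t, coord lvl w μ v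
      = ∑ v ∈ levelSet lvl t, (μ v + ∑ m ∈ levelSet lvl (t + 1), coord lvl w μ m * w m v) :=
        Finset.sum_congr rfl fun v hv => by rw [coord_eq, (Finset.mem_filter.1 hv).2]
    _ = _ := by
        rw [Finset.sum_add_distrib, Finset.sum_comm]
        simp only [← Finset.mul_sum]
        exact congrArg _ (Finset.sum_congr rfl fun m hm => by rw [hrow m hm, mul_one])

lemma sum_levelSet_coord_eq (hw : IsLayeredStochastic lvl w bot) (μ : V → ℝ) {t : ℤ}
    (ht : bot ≤ t) :
    ∑ v ∈ levelSet lvl t, coord lvl w μ v = ∑ x ∈ univ.filter (t ≤ lvl ·), μ x := by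
  obtain ⟨B, hB⟩ := (Set.finite_range lvl).bddAbove
  have hlvl : ∀ v, lvl v ≤ B := fun v => hB ⟨v, rfl⟩
  suffices h : ∀ n : ℕ, ∀ t, bot ≤ t → B + 1 - n ≤ t →
      ∑ v ∈ levelSet lvl t, coord lvl w μ v = ∑ x ∈ univ.filter (t ≤ lvl ·), μ x from
    h (B + 1 - t).toNat t ht (by omega)
  intro n
  induction n with
  | zero =>
    intro t _ ht
    have hempty : ∀ v, ¬ t ≤ lvl v := fun v => by have := hlvl v; omega
    rw [Finset.filter_false_of_mem fun v _ => hempty v, levelSet,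
      Finset.filter_false_of_mem fun v _ h => hempty v h.ge, Finset.sum_empty, Finset.sum_empty]
  | succ n ih =>
    intro t ht htn
    rcases lt_or_ge t (B + 1 - n) with htlt | htge
    · rw [sum_levelSet_coord_eq_add hw μ ht, ih (t + 1) (by omega) (by omega), levelSet,
        Finset.sum_filter, Finset.sum_filter, Finset.sum_filter, ← Finset.sum_add_distrib]
      refine Finset.sum_congr rfl fun x _ => ?_
      split_ifs <;> first | omega | ring
    · exact ih t ht htge

variable [DecidableEq V]

lemma coord_eq_zero_of_sum_eq_zero (hw : IsLayeredStochastic lvl w bot) {root : V}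
    (hroot : ∀ n, lvl n = bot ↔ n = root) {μ : V → ℝ} (hμ : ∑ x, μ x = 0) :
    coord lvl w μ root = 0 := by
  have h := sum_levelSet_coord_eq hw μ (le_refl bot)
  rwa [Finset.filter_true_of_mem fun x _ => hw.bot_le x, hμ, levelSet,
    Finset.filter_congr fun n _ => hroot n, Finset.filter_eq', if_pos (Finset.mem_univ _),
    Finset.sum_singleton] at h

variable (w) in
def basisVec (n : V) : V → ℝ := fun z => indic n z - w n z

lemma coord_basisVec (hw : IsLayeredStochastic lvl w bot) (j : V) :
    coord lvl w (basisVec w j) = indic j := by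
  refine (eq_coord lvl w fun n => ?_).symm
  rw [hw.sum_levelSet_succ_mul_eq_sum, sum_indic_mul, basisVec]
  ring

lemma sum_coord_mul_basisVec (hw : IsLayeredStochastic lvl w bot) (μ : V → ℝ) (z : V) :
    ∑ j, coord lvl w μ j * basisVec w j z = μ z := by
  simp only [basisVec, mul_sub, Finset.sum_sub_distrib, ← hw.sum_levelSet_succ_mul_eq_sum]
  rw [sum_mul_indic, coord_eq lvl w μ z]
  ring

lemma tcNorm_basisVec_le_one (hw : IsLayeredStochastic lvl w bot) {d : V → V → ℝ} {x0 n : V}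
    (hn : bot < lvl n) (hd : ∀ i, w n i ≠ 0 → d n i ≤ 1) : tcNorm d x0 (basisVec w n) ≤ 1 := by
  refine tcNorm_le zero_le_one fun f _ hf => ?_
  calc ∑ z, basisVec w n z * f z = ∑ z, w n z * (f n - f z) := by
        simp only [basisVec, sub_mul, mul_sub, Finset.sum_sub_distrib, sum_indic_mul,
          ← Finset.sum_mul, hw.sum_eq_one n hn, one_mul]
    _ ≤ ∑ z, w n z * 1 := Finset.sum_le_sum fun z _ => by
        by_cases hz : w n z = 0
        · simp [hz]
        exact mul_le_mul_of_nonneg_left ((le_abs_self _).trans ((hf n z).trans (hd z hz)))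
          (hw.nonneg n z)
    _ = 1 := by simp [hw.sum_eq_one n hn]

variable (lvl w) in
lemma coord_mol (x y : V) :
    coord lvl w (mol x y) = coord lvl w (indic x) - coord lvl w (indic y) := by
  have h : mol x y = (-1 : ℝ) • indic y + indic x := by
    ext z
    simp only [mol, Pi.add_apply, Pi.smul_apply, smul_eq_mul]
    ring
  rw [h, coord_smul_add, neg_one_smul, neg_add_eq_sub]

variable (lvl w) in
lemma sum_abs_coord_mol_comm (x y : V) :
    ∑ v, |coord lvl w (mol y x) v| = ∑ v, |coord lvl w (mol x y) v| := by
  simp only [coord_mol, Pi.sub_apply, abs_sub_comm]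

lemma coord_indic_support {P : V → Prop} {x : V} (hx : P x)
    (hP : ∀ m n, P m → w m n ≠ 0 → P n) {n : V} (hn : coord lvl w (indic x) n ≠ 0) : P n := by
  induction n using layer_induction lvl with
  | h n ih =>
    rw [coord_eq] at hn
    by_cases hnx : n = x
    · exact hnx ▸ hx
    obtain ⟨m, hm, hne⟩ := Finset.exists_ne_zero_of_sum_ne_zero (by simpa [indic, hnx] using hn)
    exact hP m n (ih m (Finset.mem_filter.1 hm).2 (left_ne_zero_of_mul hne))
      (right_ne_zero_of_mul hne)

lemma sum_levelSet_coord_indic (hw : IsLayeredStochastic lvl w bot) (x : V) {t : ℤ}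
    (ht : bot ≤ t) :
    ∑ v ∈ levelSet lvl t, coord lvl w (indic x) v = if t ≤ lvl x then 1 else 0 := by
  rw [sum_levelSet_coord_eq hw _ ht, Finset.sum_filter,
    Finset.sum_eq_single x (fun v _ hv => by simp [indic, hv]) (by simp)]
  simp [indic]

lemma coord_mol_eq_sum {x y u : V} (hux : lvl u ≠ lvl x) (huy : lvl u ≠ lvl y) :
    coord lvl w (mol x y) u =
      ∑ v ∈ levelSet lvl (lvl u + 1), coord lvl w (mol x y) v * w v u := by
  rw [coord_eq]
  simp [mol, indic, show u ≠ x by rintro rfl; exact hux rfl,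
    show u ≠ y by rintro rfl; exact huy rfl]

lemma sum_levelSet_coord_mol_eq_zero (hw : IsLayeredStochastic lvl w bot) {x y : V} {t : ℤ}
    (ht : bot ≤ t) (htx : t ≤ lvl x) (hty : t ≤ lvl y) :
    ∑ v ∈ levelSet lvl t, coord lvl w (mol x y) v = 0 := by
  simp [coord_mol, Finset.sum_sub_distrib, sum_levelSet_coord_indic hw _ ht, htx, hty]

lemma sum_levelSet_abs_coord_mol_le (hw : IsLayeredStochastic lvl w bot) (x y : V) {t : ℤ}
    (ht : bot ≤ t) :
    ∑ v ∈ levelSet lvl t, |coord lvl w (mol x y) v| ≤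
      (if t ≤ lvl x then 1 else 0) + (if t ≤ lvl y then 1 else 0) := by
  rw [← sum_levelSet_coord_indic hw x ht, ← sum_levelSet_coord_indic hw y ht,
    ← Finset.sum_add_distrib]
  refine Finset.sum_le_sum fun v _ => ?_
  have hx := coord_nonneg hw (indic_nonneg x) v
  have hy := coord_nonneg hw (indic_nonneg y) v
  rw [coord_mol, Pi.sub_apply]
  exact abs_sub_le_iff.2 ⟨by linarith, by linarith⟩

end Layered

section Distortion

variable {N : ℕ} {d : Fin (N+1) → Fin (N+1) → ℝ}

lemma d1Space_le_d1Basis (hd : ∀ i j, 0 ≤ d i j) {b : Fin (N+1) → Fin (N+1) → ℝ}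
    {bstar : Fin (N+1) → (Fin (N+1) → ℝ) → ℝ} (hb : IsFreeBasis N b bstar) :
    d1Space d ≤ d1Basis d b bstar := by
  refine csInf_le ⟨0, ?_⟩ ⟨b, bstar, hb, rfl⟩
  rintro c ⟨b', bstar', -, rfl⟩
  exact Real.sSup_nonneg fun x ⟨μ, _, _, hx⟩ =>
    hx ▸ Finset.sum_nonneg fun n _ => mul_nonneg (abs_nonneg _) (tcNorm_nonneg hd)

/-- The basis is `basisVec w n` for `n ≠ root`, moved to the indices `≠ 0` of `IsFreeBasis` by
the swap of `0` and `root`. -/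
theorem d1Space_le_of_isLayeredStochastic {lvl : Fin (N+1) → ℤ} {w : Fin (N+1) → Fin (N+1) → ℝ}
    {bot : ℤ} (hw : IsLayeredStochastic lvl w bot) {root : Fin (N+1)}
    (hroot : ∀ n, lvl n = bot ↔ n = root) (hd : ∀ i j, 0 ≤ d i j)
    (hwd : ∀ n i, w n i ≠ 0 → d n i ≤ 1) {K : ℝ} (hK : 0 ≤ K)
    (hcoord : ∀ μ, ∑ x, μ x = 0 → tcNorm d 0 μ = 1 → ∑ v, |coord lvl w μ v| ≤ K) :
    d1Space d ≤ K := by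
  set σ := Equiv.swap 0 root
  have hσ0 : σ 0 = root := Equiv.swap_apply_left 0 root
  have habove : ∀ n, n ≠ 0 → bot < lvl (σ n) := fun n hn =>
    (hw.bot_le _).lt_of_ne fun h => hn <| by
      simpa [σ, Equiv.swap_apply_eq_iff] using (hroot _).1 h.symm
  have hb : IsFreeBasis N (fun n => basisVec w (σ n)) (fun n μ => coord lvl w μ (σ n)) := by
    refine ⟨fun n hn => ?_, fun μ hμ z => ?_, fun n m _ _ => ?_, fun n c μ ν => ?_⟩
    · simp [basisVec, Finset.sum_sub_distrib, hw.sum_eq_one _ (habove n hn), indic]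
    · rw [Finset.filter_ne', Finset.sum_erase_eq_sub (Finset.mem_univ 0),
        Equiv.sum_comp σ fun j => coord lvl w μ j * basisVec w j z, sum_coord_mul_basisVec hw]
      simp [hσ0, coord_eq_zero_of_sum_eq_zero hw hroot hμ]
    · simp [coord_basisVec hw, indic, σ.injective.eq_iff]
    · simp [coord_smul_add]
  refine (d1Space_le_d1Basis hd hb).trans (Real.sSup_le ?_ hK)
  rintro c ⟨μ, hμ, hnorm, rfl⟩
  calc ∑ n ∈ univ.filter (· ≠ 0), |coord lvl w μ (σ n)| * tcNorm d 0 (basisVec w (σ n))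
      ≤ ∑ n ∈ univ.filter (· ≠ 0), |coord lvl w μ (σ n)| :=
        Finset.sum_le_sum fun n hn => mul_le_of_le_one_right (abs_nonneg _)
          (tcNorm_basisVec_le_one hw (habove n (Finset.mem_filter.1 hn).2) (hwd _))
    _ ≤ ∑ n, |coord lvl w μ (σ n)| :=
        Finset.sum_le_sum_of_subset_of_nonneg (Finset.filter_subset _ _) fun _ _ _ => abs_nonneg _
    _ = ∑ v, |coord lvl w μ v| := Equiv.sum_comp σ fun v => |coord lvl w μ v|
    _ ≤ K := hcoord μ hμ hnorm

end Distortion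

section HyperbolicApproximation

variable {M : Type*} [MetricSpace M] {L : ℤ → Set M} {k N : ℕ} (lam r : ℝ)
  (e : Fin (N+1) ≃ HypV M L k)

def level (n : Fin (N+1)) : ℤ := (e n).1.1

def point (n : Fin (N+1)) : M := (e n).1.2

lemma level_mem_Icc (n : Fin (N+1)) : level e n ∈ Finset.Icc (-(k : ℤ)) k := (e n).2.1

lemma point_mem (n : Fin (N+1)) : point e n ∈ L (level e n) := (e n).2.2

variable {e} in
lemma eq_of_level_eq_of_point_eq {n m : Fin (N+1)} (h1 : level e n = level e m)
    (h2 : point e n = point e m) : n = m :=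
  e.injective (Subtype.ext (Prod.ext h1 h2))

lemma exists_level_point {t : ℤ} (ht : t ∈ Finset.Icc (-(k : ℤ)) k) {x : M} (hx : x ∈ L t) :
    ∃ n, level e n = t ∧ point e n = x :=
  ⟨e.symm ⟨(t, x), ht, hx⟩, congrArg (fun v => v.1.1) (e.apply_symm_apply _),
    congrArg (fun v => v.1.2) (e.apply_symm_apply _)⟩

def levelBall (t : ℤ) (z : M) (R : ℝ) : Finset (Fin (N+1)) :=
  (levelSet (level e) t).filter fun u => dist (point e u) z ≤ R

lemma card_levelBall {t : ℤ} (ht : t ∈ Finset.Icc (-(k : ℤ)) k) (z : M) (R : ℝ) :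
    (levelBall e t z R).card = (L t ∩ Metric.closedBall z R).ncard := by
  rw [← Finset.card_image_of_injOn (f := point e), ← Set.ncard_coe_finset]
  · congr 1
    ext x
    simp only [levelBall, levelSet, Finset.coe_image, Set.mem_image, Finset.mem_coe,
      Finset.mem_filter, Finset.mem_univ, true_and, Set.mem_inter_iff, Metric.mem_closedBall]
    constructor
    · rintro ⟨u, ⟨rfl, hu⟩, rfl⟩
      exact ⟨point_mem e u, hu⟩
    · rintro ⟨hx, hxz⟩
      obtain ⟨n, rfl, rfl⟩ := exists_level_point e ht hx
      exact ⟨n, ⟨rfl, hxz⟩, rfl⟩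
  · intro u hu v hv huv
    simp only [levelBall, levelSet, Finset.mem_coe, Finset.mem_filter, Finset.mem_univ,
      true_and] at hu hv
    exact eq_of_level_eq_of_point_eq (hu.1.trans hv.1.symm) huv

/-- The radial neighbours `N(n)` of `n` (cf. `radialNbrs`), as indices. -/
def parents (n : Fin (N+1)) : Finset (Fin (N+1)) :=
  (levelSet (level e) (level e n - 1)).filter fun i =>
    Metric.closedBall (point e n) (lam * r ^ level e n) ⊆
      Metric.closedBall (point e i) (lam * r ^ level e i)

def parentWeight (n i : Fin (N+1)) : ℝ :=
  if i ∈ parents lam r e n then ((parents lam r e n).card : ℝ)⁻¹ else 0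

variable {lam r e}

lemma mem_parents {n i : Fin (N+1)} :
    i ∈ parents lam r e n ↔ level e i = level e n - 1 ∧
      Metric.closedBall (point e n) (lam * r ^ level e n) ⊆
        Metric.closedBall (point e i) (lam * r ^ level e i) := by
  simp [parents, levelSet]

lemma mem_parents_of_parentWeight_ne_zero {n i : Fin (N+1)} (h : parentWeight lam r e n i ≠ 0) :
    i ∈ parents lam r e n := by
  by_contra hi
  exact h (if_neg hi)

lemma parents_nonempty (hr0 : 0 < r) (hlam : 1 ≤ lam * (1 - r)) (hL : ∀ i, IsNet (r ^ i) (L i))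
    {n : Fin (N+1)} (hn : -(k : ℤ) < level e n) : (parents lam r e n).Nonempty := by
  have hnk := Finset.mem_Icc.1 (level_mem_Icc e n)
  obtain ⟨u, hu, hnu⟩ := (hL (level e n - 1)).2 (point e n)
  obtain ⟨m, hm, rfl⟩ := exists_level_point e (Finset.mem_Icc.2 ⟨by omega, by omega⟩) hu
  refine ⟨m, mem_parents.2 ⟨hm, fun p hp => ?_⟩⟩
  rw [Metric.mem_closedBall] at hp ⊢
  have hpow : r ^ level e n = r ^ (level e n - 1) * r := by
    rw [← zpow_add_one₀ hr0.ne', sub_add_cancel]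
  have hpos : 0 < r ^ (level e n - 1) := zpow_pos hr0 _
  rw [hm]
  calc dist p (point e m) ≤ dist p (point e n) + dist (point e n) (point e m) := dist_triangle _ _ _
    _ ≤ lam * (r ^ (level e n - 1) * r) + r ^ (level e n - 1) := by rw [← hpow]; gcongr
    _ ≤ lam * r ^ (level e n - 1) := by nlinarith

lemma isLayeredStochastic_parentWeight (hr0 : 0 < r) (hlam : 1 ≤ lam * (1 - r))
    (hL : ∀ i, IsNet (r ^ i) (L i)) :
    IsLayeredStochastic (level e) (parentWeight lam r e) (-(k : ℤ)) where
  nonneg n i := by unfold parentWeight; split_ifs <;> positivity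
  level_eq_of_ne_zero n i h := by
    have := (mem_parents.1 (mem_parents_of_parentWeight_ne_zero h)).1
    omega
  sum_eq_one n hn := by
    have hcard : ((parents lam r e n).card : ℝ) ≠ 0 := by
      exact_mod_cast (parents_nonempty hr0 hlam hL hn).card_ne_zero
    simp [parentWeight, Finset.sum_ite_mem, hcard]
  bot_le n := (Finset.mem_Icc.1 (level_mem_Icc e n)).1

lemma adj_of_mem_parents {n i : Fin (N+1)} (h : i ∈ parents lam r e n) :
    (hypGraph lam r M L k).Adj (e n) (e i) := by
  obtain ⟨hlev, hball⟩ := mem_parents.1 h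
  refine (SimpleGraph.fromRel_adj _ _ _).2 ⟨fun heq => ?_, Or.inr (Or.inr ⟨by
    change level e n = level e i + 1; omega, hball⟩)⟩
  have : level e n = level e i := congrArg (fun v : HypV M L k => v.1.1) heq
  omega

lemma exists_root [CompactSpace M] (hr0 : 0 < r) (hr1 : r < 1) (hL : ∀ i, IsNet (r ^ i) (L i))
    (hk : Real.logb (1 / r) (Metric.diam (Set.univ : Set M)) < k) :
    ∃ root, ∀ n, level e n = -(k : ℤ) ↔ n = root := by
  have hdiam : Metric.diam (Set.univ : Set M) < r ^ (-(k : ℤ)) := by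
    have hpow : (1 / r) ^ (k : ℝ) = r ^ (-(k : ℤ)) := by
      rw [Real.rpow_natCast, one_div, inv_pow, ← zpow_natCast, ← zpow_neg]
    rcases (Metric.diam_nonneg (s := (Set.univ : Set M))).eq_or_lt with hd | hd
    · exact hd ▸ zpow_pos hr0 _
    · exact hpow ▸ (Real.logb_lt_iff_lt_rpow (one_lt_one_div hr0 hr1) hd).1 hk
  obtain ⟨u, hu, -⟩ := (hL (-(k : ℤ))).2 (point e 0)
  obtain ⟨root, hroot, -⟩ := exists_level_point e (by simp) hu
  refine ⟨root, fun n => ⟨fun hn => ?_, fun h => h ▸ hroot⟩⟩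
  by_contra hne
  have hsep := (hL (-(k : ℤ))).1 _ (hn ▸ point_mem e n) _ (hroot ▸ point_mem e root)
    fun h => hne (eq_of_level_eq_of_point_eq (hn.trans hroot.symm) h)
  have := Metric.dist_le_diam_of_mem isCompact_univ.isBounded (Set.mem_univ (point e n))
    (Set.mem_univ (point e root))
  linarith

lemma hypGraph_connected (hw : IsLayeredStochastic (level e) (parentWeight lam r e) (-(k : ℤ)))
    {root : Fin (N+1)} (hroot : ∀ n, level e n = -(k : ℤ) ↔ n = root) :
    (hypGraph lam r M L k).Connected := by
  have hreach : ∀ (s : ℕ) (n : Fin (N+1)), level e n = -(k : ℤ) + s →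
      (hypGraph lam r M L k).Reachable (e n) (e root) := by
    intro s
    induction s with
    | zero => intro n hn; rw [(hroot n).1 (by simpa using hn)]
    | succ s ih =>
      intro n hn
      obtain ⟨i, hi⟩ := hw.exists_ne_zero (n := n) (by omega)
      have hi := mem_parents_of_parentWeight_ne_zero hi
      exact (adj_of_mem_parents hi).reachable.trans
        (ih i (by have := (mem_parents.1 hi).1; push_cast at hn; omega))
  have hreach' : ∀ n, (hypGraph lam r M L k).Reachable (e n) (e root) := fun n =>
    hreach (level e n + k).toNat n (by have := Finset.mem_Icc.1 (level_mem_Icc e n); omega)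
  have : Nonempty (HypV M L k) := ⟨e root⟩
  exact ⟨fun a b => by
    simpa using (hreach' (e.symm a)).trans (hreach' (e.symm b)).symm⟩

end HyperbolicApproximation

section HyperbolicEstimate

variable {M : Type*} [MetricSpace M] {L : ℤ → Set M} {k N : ℕ} {lam r : ℝ}
  {e : Fin (N+1) ≃ HypV M L k}

lemma closedBall_subset_of_coord_indic_ne_zero {x v : Fin (N+1)}
    (h : coord (level e) (parentWeight lam r e) (indic x) v ≠ 0) :
    Metric.closedBall (point e x) (lam * r ^ level e x) ⊆
      Metric.closedBall (point e v) (lam * r ^ level e v) :=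
  coord_indic_support (P := fun v => Metric.closedBall (point e x) (lam * r ^ level e x) ⊆
      Metric.closedBall (point e v) (lam * r ^ level e v)) subset_rfl
    (fun _ _ hm hmn => hm.trans (mem_parents.1 (mem_parents_of_parentWeight_ne_zero hmn)).2) h

lemma dist_le_of_coord_mol_ne_zero {x y v : Fin (N+1)} {z : M}
    (hzx : dist z (point e x) ≤ lam * r ^ level e x)
    (hzy : dist z (point e y) ≤ lam * r ^ level e y)
    (h : coord (level e) (parentWeight lam r e) (mol x y) v ≠ 0) :
    dist z (point e v) ≤ lam * r ^ level e v := by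
  rw [coord_mol, Pi.sub_apply, sub_ne_zero] at h
  by_cases hx : coord (level e) (parentWeight lam r e) (indic x) v = 0
  · exact closedBall_subset_of_coord_indic_ne_zero (fun hy => h (hx.trans hy.symm)) hzy
  · exact closedBall_subset_of_coord_indic_ne_zero hx hzx

/-- The `3 r` margin in the homogeneity condition: a net point of the layer below that is this
close to `z` is a radial neighbour of every vertex whose ball contains `z`. -/
lemma mem_parents_of_mem_levelBall (hr0 : 0 < r) (hlam : 0 ≤ lam) {v u : Fin (N+1)} {z : M}
    (hv : dist z (point e v) ≤ lam * r ^ level e v)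
    (hu : u ∈ levelBall e (level e v - 1) z (lam * r ^ (level e v - 1) * (1 - 3 * r))) :
    u ∈ parents lam r e v := by
  simp only [levelBall, levelSet, Finset.mem_filter, Finset.mem_univ, true_and] at hu
  refine mem_parents.2 ⟨hu.1, fun p hp => ?_⟩
  rw [Metric.mem_closedBall] at hp ⊢
  have hpow : r ^ level e v = r ^ (level e v - 1) * r := by
    rw [← zpow_add_one₀ hr0.ne', sub_add_cancel]
  have hpos : 0 ≤ lam * r ^ (level e v - 1) := mul_nonneg hlam (zpow_pos hr0 _).le
  rw [hu.1]
  calc dist p (point e u) ≤ dist p (point e v) + dist (point e v) z + dist z (point e u) :=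
        dist_triangle4 _ _ _ _
    _ ≤ lam * r ^ level e v + lam * r ^ level e v +
          lam * r ^ (level e v - 1) * (1 - 3 * r) :=
        add_le_add (add_le_add hp (dist_comm z (point e v) ▸ hv)) (dist_comm (point e u) z ▸ hu.2)
    _ ≤ lam * r ^ (level e v - 1) := by rw [hpow]; nlinarith

lemma mem_levelBall_of_mem_parents {v u : Fin (N+1)} {z : M}
    (hv : dist z (point e v) ≤ lam * r ^ level e v) (hu : u ∈ parents lam r e v) :
    u ∈ levelBall e (level e v - 1) z (lam * r ^ (level e v - 1)) := by
  obtain ⟨hlev, hball⟩ := mem_parents.1 hu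
  have := hball (Metric.mem_closedBall.2 hv)
  rw [Metric.mem_closedBall, dist_comm, hlev] at this
  simpa [levelBall, levelSet, hlev] using this

lemma card_levelBall_le {C : ℝ} (hhom : IsHomog M lam r C) (hr0 : 0 < r)
    (hL : ∀ i, IsNet (r ^ i) (L i)) {t : ℤ} (ht : t ∈ Finset.Icc (-(k : ℤ)) k) (z : M) :
    ((levelBall e t z (lam * r ^ t)).card : ℝ) ≤
      C * (levelBall e t z (lam * r ^ t * (1 - 3 * r))).card := by
  rw [card_levelBall e ht, card_levelBall e ht]
  exact (hhom _ (zpow_pos hr0 t) _ (hL t) z).2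

lemma card_parents_le (hr0 : 0 < r) {C : ℝ} (hhom : IsHomog M lam r C)
    (hL : ∀ i, IsNet (r ^ i) (L i)) {v : Fin (N+1)} {z : M}
    (hv : dist z (point e v) ≤ lam * r ^ level e v) (hvk : -(k : ℤ) < level e v) :
    ((parents lam r e v).card : ℝ) ≤
      C * (levelBall e (level e v - 1) z (lam * r ^ (level e v - 1) * (1 - 3 * r))).card := by
  have hv' := Finset.mem_Icc.1 (level_mem_Icc e v)
  calc ((parents lam r e v).card : ℝ)
      ≤ (levelBall e (level e v - 1) z (lam * r ^ (level e v - 1))).card := by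
        exact_mod_cast Finset.card_le_card fun u => mem_levelBall_of_mem_parents hv
    _ ≤ _ := card_levelBall_le hhom hr0 hL (Finset.mem_Icc.2 ⟨by omega, by omega⟩) z

lemma inv_le_parentWeight (hr0 : 0 < r) (hlam : 0 ≤ lam) {C : ℝ} (hhom : IsHomog M lam r C)
    (hL : ∀ i, IsNet (r ^ i) (L i)) {v u : Fin (N+1)} {z : M}
    (hv : dist z (point e v) ≤ lam * r ^ level e v) (hvk : -(k : ℤ) < level e v)
    (hu : u ∈ levelBall e (level e v - 1) z (lam * r ^ (level e v - 1) * (1 - 3 * r))) :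
    (C * (levelBall e (level e v - 1) z
      (lam * r ^ (level e v - 1) * (1 - 3 * r))).card)⁻¹ ≤ parentWeight lam r e v u := by
  have hpar := mem_parents_of_mem_levelBall hr0 hlam hv hu
  rw [parentWeight, if_pos hpar]
  exact inv_anti₀ (by exact_mod_cast Finset.card_pos.2 ⟨u, hpar⟩)
    (card_parents_le hr0 hhom hL hv hvk)

lemma sum_levelSet_abs_coord_mol_pred_le (hr0 : 0 < r) (hlam : 0 ≤ lam) {C : ℝ}
    (hw : IsLayeredStochastic (level e) (parentWeight lam r e) (-(k : ℤ)))
    (hhom : IsHomog M lam r C) (hL : ∀ i, IsNet (r ^ i) (L i)) {x y : Fin (N+1)} {z : M}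
    (hzx : dist z (point e x) ≤ lam * r ^ level e x)
    (hzy : dist z (point e y) ≤ lam * r ^ level e y) {t : ℤ} (htx : t ≤ level e x)
    (hty : t ≤ level e y) (ht : -(k : ℤ) < t) :
    ∑ u ∈ levelSet (level e) (t - 1), |coord (level e) (parentWeight lam r e) (mol x y) u| ≤
      (1 - C⁻¹) * ∑ v ∈ levelSet (level e) t,
        |coord (level e) (parentWeight lam r e) (mol x y) v| := by
  set W := coord (level e) (parentWeight lam r e) (mol x y)
  set K := levelBall e (t - 1) z (lam * r ^ (t - 1) * (1 - 3 * r))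
  have hlev : ∀ {v}, v ∈ levelSet (level e) t → level e v = t := fun hv =>
    (Finset.mem_filter.1 hv).2
  have hrec : ∀ u ∈ levelSet (level e) (t - 1),
      W u = ∑ v ∈ levelSet (level e) t, W v * parentWeight lam r e v u := fun u hu => by
    have hu := (Finset.mem_filter.1 hu).2
    simpa only [hu, sub_add_cancel] using coord_mol_eq_sum (w := parentWeight lam r e)
      (show level e u ≠ level e x by omega) (show level e u ≠ level e y by omega)
  by_cases h0 : ∀ v ∈ levelSet (level e) t, W v = 0
  · have hU : ∀ u ∈ levelSet (level e) (t - 1), W u = 0 := fun u hu => by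
      rw [hrec u hu]
      exact Finset.sum_eq_zero fun v hv => by rw [h0 v hv, zero_mul]
    rw [Finset.sum_eq_zero fun u hu => by rw [hU u hu, abs_zero],
      Finset.sum_eq_zero fun v hv => by rw [h0 v hv, abs_zero], mul_zero]
  obtain ⟨v₀, hv₀, hW₀⟩ : ∃ v ∈ levelSet (level e) t, W v ≠ 0 := by simpa using h0
  have hK : (K.card : ℝ) ≠ 0 := by
    obtain ⟨i, hi⟩ := hw.exists_ne_zero (n := v₀) (by rw [hlev hv₀]; exact ht)
    have hpos : (0 : ℝ) < (parents lam r e v₀).card := by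
      exact_mod_cast Finset.card_pos.2 ⟨i, mem_parents_of_parentWeight_ne_zero hi⟩
    have := card_parents_le hr0 hhom hL (dist_le_of_coord_mol_ne_zero hzx hzy hW₀)
      (by rw [hlev hv₀]; exact ht)
    rw [hlev hv₀] at this
    intro h
    rw [h, mul_zero] at this
    linarith
  calc ∑ u ∈ levelSet (level e) (t - 1), |W u|
      = ∑ u ∈ levelSet (level e) (t - 1),
          |∑ v ∈ levelSet (level e) t, W v * parentWeight lam r e v u| :=
        Finset.sum_congr rfl fun u hu => by rw [hrec u hu]
    _ ≤ (1 - (C * K.card)⁻¹ * K.card) * ∑ v ∈ levelSet (level e) t, |W v| := by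
        refine sum_abs_sum_mul_le (sum_levelSet_coord_mol_eq_zero hw ht.le htx hty)
          (Finset.filter_subset _ _) fun v hv hWv => ⟨fun u _ => hw.nonneg v u, ?_, fun u hu => ?_⟩
        · rw [← hlev hv]
          exact hw.sum_levelSet_pred_eq_one (by rw [hlev hv]; exact ht)
        · have := inv_le_parentWeight hr0 hlam hhom hL (dist_le_of_coord_mol_ne_zero hzx hzy hWv)
            (by rw [hlev hv]; exact ht) (u := u) (by rw [hlev hv]; exact hu)
          rwa [hlev hv] at this
    _ = _ := by rw [mul_inv, mul_assoc, inv_mul_cancel₀ hK, mul_one]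

lemma sum_levelSet_abs_coord_mol_sub_le (hr0 : 0 < r) (hlam : 0 ≤ lam) {C : ℝ}
    (hw : IsLayeredStochastic (level e) (parentWeight lam r e) (-(k : ℤ)))
    (hhom : IsHomog M lam r C) (hL : ∀ i, IsNet (r ^ i) (L i)) {x y : Fin (N+1)} {z : M}
    (hzx : dist z (point e x) ≤ lam * r ^ level e x)
    (hzy : dist z (point e y) ≤ lam * r ^ level e y) (hyx : level e y ≤ level e x)
    (hγ : 0 ≤ 1 - C⁻¹) (s : ℕ) :
    ∑ v ∈ levelSet (level e) (level e y - s),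
      |coord (level e) (parentWeight lam r e) (mol x y) v| ≤ 2 * (1 - C⁻¹) ^ s := by
  induction s with
  | zero =>
    simpa [hyx, one_add_one_eq_two] using
      sum_levelSet_abs_coord_mol_le hw x y (Finset.mem_Icc.1 (level_mem_Icc e y)).1
  | succ s ih =>
    rcases lt_or_ge (-(k : ℤ)) (level e y - s) with hs | hs
    · rw [Nat.cast_succ, ← sub_sub]
      calc _ ≤ (1 - C⁻¹) * ∑ v ∈ levelSet (level e) (level e y - s),
            |coord (level e) (parentWeight lam r e) (mol x y) v| :=
            sum_levelSet_abs_coord_mol_pred_le hr0 hlam hw hhom hL hzx hzy (by omega) (by omega) hs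
        _ ≤ (1 - C⁻¹) * (2 * (1 - C⁻¹) ^ s) := by gcongr
        _ = 2 * (1 - C⁻¹) ^ (s + 1) := by ring
    · refine le_of_eq_of_le (Finset.sum_eq_zero fun v hv => ?_) (by positivity)
      have := (Finset.mem_Icc.1 (level_mem_Icc e v)).1
      have := (Finset.mem_filter.1 hv).2
      omega

lemma sum_abs_coord_mol_le (hr0 : 0 < r) (hlam : 0 ≤ lam) {C : ℝ} (hC : 1 < C)
    (hw : IsLayeredStochastic (level e) (parentWeight lam r e) (-(k : ℤ)))
    (hhom : IsHomog M lam r C) (hL : ∀ i, IsNet (r ^ i) (L i)) {x y : Fin (N+1)} {z : M}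
    (hzx : dist z (point e x) ≤ lam * r ^ level e x)
    (hzy : dist z (point e y) ≤ lam * r ^ level e y)
    (hyx : level e y ≤ level e x) (hxy : level e x ≤ level e y + 1) :
    ∑ v, |coord (level e) (parentWeight lam r e) (mol x y) v| ≤ 1 + 2 * C := by
  set D : ℤ → ℝ := fun t =>
    ∑ v ∈ levelSet (level e) t, |coord (level e) (parentWeight lam r e) (mol x y) v|
  set I := Finset.Icc (-(k : ℤ)) k
  have hγ0 : 0 ≤ 1 - C⁻¹ := sub_nonneg.2 (inv_le_one_of_one_le₀ hC.le)
  have hγ1 : 1 - C⁻¹ < 1 := sub_lt_self _ (inv_pos.2 (by linarith))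
  have hlow : ∑ t ∈ I.filter (· ≤ level e y), D t ≤ 2 * C :=
    calc ∑ t ∈ I.filter (· ≤ level e y), D t
        ≤ ∑ t ∈ I.filter (· ≤ level e y), 2 * (1 - C⁻¹) ^ (level e y - t).toNat :=
          Finset.sum_le_sum fun t ht => by
            have := (Finset.mem_filter.1 ht).2
            simpa [D, Int.toNat_of_nonneg (sub_nonneg.2 this)] using
              sum_levelSet_abs_coord_mol_sub_le hr0 hlam hw hhom hL hzx hzy hyx hγ0
                (level e y - t).toNat
      _ ≤ 2 * (1 - (1 - C⁻¹))⁻¹ := by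
          rw [← Finset.mul_sum]
          exact mul_le_mul_of_nonneg_left
            (sum_pow_toNat_sub_le hγ0 hγ1 fun t ht => (Finset.mem_filter.1 ht).2) zero_le_two
      _ = 2 * C := by rw [sub_sub_cancel, inv_inv]
  have hhigh : ∑ t ∈ I.filter (¬ · ≤ level e y), D t ≤ 1 :=
    calc ∑ t ∈ I.filter (¬ · ≤ level e y), D t
        ≤ ∑ t ∈ I.filter (¬ · ≤ level e y), if level e x = t then 1 else 0 :=
          Finset.sum_le_sum fun t ht => by
            obtain ⟨ht, hty⟩ := Finset.mem_filter.1 ht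
            refine (sum_levelSet_abs_coord_mol_le hw x y (Finset.mem_Icc.1 ht).1).trans_eq ?_
            split_ifs <;> first | omega | norm_num
      _ ≤ 1 := by rw [Finset.sum_ite_eq]; split_ifs <;> norm_num
  calc ∑ v, |coord (level e) (parentWeight lam r e) (mol x y) v| = ∑ t ∈ I, D t :=
        (Finset.sum_fiberwise_of_maps_to (fun v _ => level_mem_Icc e v) _).symm
    _ ≤ 1 + 2 * C := by
        rw [← Finset.sum_filter_add_sum_filter_not _ (· ≤ level e y)]
        linarith

lemma sum_abs_coord_mol_le_of_adj (hr0 : 0 < r) (hlam : 0 ≤ lam) {C : ℝ} (hC : 1 < C)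
    (hw : IsLayeredStochastic (level e) (parentWeight lam r e) (-(k : ℤ)))
    (hhom : IsHomog M lam r C) (hL : ∀ i, IsNet (r ^ i) (L i)) {x y : Fin (N+1)}
    (h : (hypGraph lam r M L k).Adj (e x) (e y)) :
    ∑ v, |coord (level e) (parentWeight lam r e) (mol x y) v| ≤ 1 + 2 * C := by
  have hcenter : ∀ n, point e n ∈ Metric.closedBall (point e n) (lam * r ^ level e n) := fun n =>
    Metric.mem_closedBall_self (mul_nonneg hlam (zpow_pos hr0 _).le)
  obtain ⟨-, (⟨hlev, z, hzx, hzy⟩ | ⟨hlev, hball⟩) | (⟨hlev, z, hzy, hzx⟩ | ⟨hlev, hball⟩)⟩ :=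
    (SimpleGraph.fromRel_adj _ _ _).1 h
  · exact sum_abs_coord_mol_le hr0 hlam hC hw hhom hL hzx (z := z)
      (by rwa [show level e y = level e x from hlev.symm]) hlev.symm.le (by simp [level, hlev])
  · have hlev : level e y = level e x + 1 := hlev
    rw [← sum_abs_coord_mol_comm]
    exact sum_abs_coord_mol_le hr0 hlam hC hw hhom hL (hcenter y) (hball (hcenter y))
      (by omega) (by omega)
  · exact sum_abs_coord_mol_le hr0 hlam hC hw hhom hL (z := z)
      (by rwa [show level e x = level e y from hlev.symm]) hzy hlev.le (by simp [level, hlev])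
  · have hlev : level e x = level e y + 1 := hlev
    exact sum_abs_coord_mol_le hr0 hlam hC hw hhom hL (hcenter x) (hball (hcenter x))
      (by omega) (by omega)

lemma sum_abs_coord_le (hr0 : 0 < r) (hlam : 0 ≤ lam) {C : ℝ} (hC : 1 < C)
    (hw : IsLayeredStochastic (level e) (parentWeight lam r e) (-(k : ℤ)))
    (hhom : IsHomog M lam r C) (hL : ∀ i, IsNet (r ^ i) (L i))
    (hconn : (hypGraph lam r M L k).Connected) {μ : Fin (N+1) → ℝ} (hμ : ∑ x, μ x = 0)
    (hnorm : tcNorm (fun i j => ((hypGraph lam r M L k).dist (e i) (e j) : ℝ)) 0 μ ≤ 1) :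
    ∑ v, |coord (level e) (parentWeight lam r e) μ v| ≤ 1 + 2 * C := by
  refine le_of_tcNorm_le_one (Adj := fun i j => (hypGraph lam r M L k).Adj (e i) (e j))
    (fun g hg i j => ?_) (convexOn_sum_abs_coord _ _) (by simp [coord_zero]; linarith)
    (fun i j h => sum_abs_coord_mol_le_of_adj hr0 hlam hC hw hhom hL h) hμ hnorm
  simpa using hconn.abs_sub_le_dist (g := g ∘ e.symm)
    (fun a b h => by simpa using hg (e.symm a) (e.symm b) (by simpa using h)) (e i) (e j)

end HyperbolicEstimate

theorem statement17 (lam r C : ℝ) (hlam : 2 ≤ lam) (hr0 : 0 < r) (hr : r < 1 / 6)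
    (hC : 1 < C)
    (M : Type*) [MetricSpace M] [CompactSpace M] (hhom : IsHomog M lam r C)
    (L : ℤ → Set M) (hL : ∀ i : ℤ, IsNet (r ^ i) (L i))
    (k : ℕ) (hk : Real.logb (1 / r) (Metric.diam (Set.univ : Set M)) < k)
    (N : ℕ) (e : Fin (N+1) ≃ HypV M L k) :
    d1Space (fun i j => ((hypGraph lam r M L k).dist (e i) (e j) : ℝ)) ≤ 1 + 2 * C := by
  have hw := isLayeredStochastic_parentWeight (lam := lam) (e := e) hr0 (by nlinarith) hL
  obtain ⟨root, hroot⟩ := exists_root (e := e) hr0 (by linarith) hL hk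
  refine d1Space_le_of_isLayeredStochastic hw hroot (fun _ _ => Nat.cast_nonneg _)
    (fun n i h => ?_) (by linarith) fun μ hμ hnorm =>
      sum_abs_coord_le hr0 (by linarith) hC hw hhom hL (hypGraph_connected hw hroot) hμ hnorm.le
  exact_mod_cast (SimpleGraph.dist_eq_one_iff_adj.2
    (adj_of_mem_parents (mem_parents_of_parentWeight_ne_zero h))).le

end TCS
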